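/- Let σ be a mixed strategy such that |A_i| ≥ 2 for every player i and for every player i, either exactly one action in A_i is σ-supported, or there exist σ-supported j, k ∈ A_i with j ≠ k and σ_{ij} ≠ σ_{ik}. Define γ^{CCE} as the minimum, over all players i and all m ∈ A_i with p_{im} < 1, of ∑_{ℓ ∈ A_i} p_{iℓ} t_{iℓm}; then γ^{CCE} > 0. Moreover, for any B > 0 and any ε with 0 < ε ≤ B·γ^{CCE}, the scaled witness utility u := B·w satisfies |u_i(j, a_{-i})| ≤ B for all i, j, a_{-i}, and for every player i and every m ∈ A_i with p_{im} < 1, ∑_{a ∈ A} σ(a) (u_i(a) − u_i(m, a_{-i})) ≥ ε. -/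

import Mathlib

open scoped BigOperators

section Prelim

variable {n : ℕ}

/-- Joint action obtained from player `i`'s action `j` and the other players' actions `b`,
i.e. the joint action `(j, a_{-i})`. -/
def joinA {A : Fin n → Type*} (i : Fin n) (j : A i)
    (b : ∀ l : {l : Fin n // l ≠ i}, A l) : ∀ l, A l :=
  fun l => if h : l = i then h.symm ▸ j else b ⟨l, h⟩

/-- The actions `a_{-i}` of all players other than `i` in the joint action `a`. -/
def restr {A : Fin n → Type*} (i : Fin n) (a : ∀ l, A l) :
    ∀ l : {l : Fin n // l ≠ i}, A l :=
  fun l => a l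

/-- `σ` is a mixed strategy: nonnegative and sums to one. -/
def IsMixed {X : Type*} [Fintype X] (σ : X → ℝ) : Prop :=
  (∀ x, 0 ≤ σ x) ∧ ∑ x, σ x = 1

/-- Marginal probability `p_{ij}` that player `i` plays `j` under `σ`. -/
noncomputable def marg {A : Fin n → Type*} [∀ l, Fintype (A l)]
    (σ : (∀ l, A l) → ℝ) (i : Fin n) (j : A i) : ℝ :=
  ∑ b : ∀ l : {l : Fin n // l ≠ i}, A l, σ (joinA i j b)

/-- Conditional distribution `σ_{ij}` over the other players' actions:
`σ_{ij}(a_{-i}) = σ(j, a_{-i}) / p_{ij}` if `p_{ij} > 0`, and the zero function otherwise. -/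
noncomputable def condl {A : Fin n → Type*} [∀ l, Fintype (A l)]
    (σ : (∀ l, A l) → ℝ) (i : Fin n) (j : A i) :
    (∀ l : {l : Fin n // l ≠ i}, A l) → ℝ :=
  fun b => if 0 < marg σ i j then σ (joinA i j b) / marg σ i j else 0

/-- Euclidean norm `‖·‖₂` on `ℝ^X`. -/
noncomputable def norm2 {X : Type*} [Fintype X] (f : X → ℝ) : ℝ :=
  Real.sqrt (∑ x, f x ^ 2)

/-- Euclidean inner product `⟨·,·⟩` on `ℝ^X`. -/
noncomputable def inner2 {X : Type*} [Fintype X] (f g : X → ℝ) : ℝ :=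
  ∑ x, f x * g x

/-- The witness utility `w_i(j, a_{-i}) = σ_{ij}(a_{-i}) / ‖σ_{ij}‖₂` if `p_{ij} > 0`,
and `0` otherwise. -/
noncomputable def wit {A : Fin n → Type*} [∀ l, Fintype (A l)]
    (σ : (∀ l, A l) → ℝ) (i : Fin n) (a : ∀ l, A l) : ℝ :=
  if 0 < marg σ i (a i) then condl σ i (a i) (restr i a) / norm2 (condl σ i (a i)) else 0

open Classical in
/-- `t_{ijk} = ‖σ_{ij}‖₂ - ⟨σ_{ij}, σ_{ik}⟩ / ‖σ_{ik}‖₂` if `σ_{ik} ≠ 0`,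
and `t_{ijk} = ‖σ_{ij}‖₂` if `σ_{ik} = 0`. -/
noncomputable def tq {A : Fin n → Type*} [∀ l, Fintype (A l)]
    (σ : (∀ l, A l) → ℝ) (i : Fin n) (j k : A i) : ℝ :=
  if condl σ i k = 0 then norm2 (condl σ i j)
  else norm2 (condl σ i j) - inner2 (condl σ i j) (condl σ i k) / norm2 (condl σ i k)

end Prelim

/-!
Expanding over player `i`'s own action, the deviation gain of the witness utility against
the constant deviation to `m` is `∑_ℓ p_{iℓ} t_{iℓm}`, because `w_i(ℓ, ·)` is `σ_{iℓ}`
normalised to unit length. Each `t_{iℓm}` is nonnegative by Cauchy–Schwarz, and it is strictly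
positive when `ℓ` is supported and `σ_{iℓ} ≠ σ_{im}`: distinct conditionals are either a
probability vector against `0`, or two probability vectors, which are never parallel. The
hypothesis on `σ` provides such an `ℓ` whenever `p_{im} < 1`.
-/

section Euclidean

variable {X : Type*} [Fintype X]

lemma norm2_eq_norm (f : X → ℝ) : norm2 f = ‖WithLp.toLp 2 f‖ := by
  simp [EuclideanSpace.norm_eq, norm2, Real.norm_eq_abs, sq_abs]

lemma inner2_eq_inner (f g : X → ℝ) :
    inner2 f g = inner ℝ (WithLp.toLp 2 f) (WithLp.toLp 2 g) := by
  simp [PiLp.inner_apply, inner2, mul_comm]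

lemma norm2_nonneg (f : X → ℝ) : 0 ≤ norm2 f := Real.sqrt_nonneg _

lemma norm2_pos {f : X → ℝ} (hf : f ≠ 0) : 0 < norm2 f := by
  rw [norm2_eq_norm, norm_pos_iff]
  exact fun h => hf (WithLp.toLp_injective 2 h)

lemma abs_div_norm2_le_one (f : X → ℝ) (x : X) : |f x / norm2 f| ≤ 1 := by
  rw [abs_div, abs_of_nonneg (norm2_nonneg f)]
  refine div_le_one_of_le₀ ?_ (norm2_nonneg f)
  rw [norm2_eq_norm, ← Real.norm_eq_abs]
  exact PiLp.norm_apply_le (WithLp.toLp 2 f) x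

lemma inner2_le_norm2_mul_norm2 (f g : X → ℝ) : inner2 f g ≤ norm2 f * norm2 g := by
  rw [inner2_eq_inner, norm2_eq_norm, norm2_eq_norm]
  exact real_inner_le_norm _ _

lemma inner2_lt_norm2_mul_norm2 {f g : X → ℝ} (hne : f ≠ g) (hsum : ∑ x, f x = ∑ x, g x)
    (hf : ∑ x, f x ≠ 0) : inner2 f g < norm2 f * norm2 g := by
  rw [inner2_eq_inner, norm2_eq_norm, norm2_eq_norm, inner_lt_norm_mul_iff_real,
    ← norm2_eq_norm, ← norm2_eq_norm]
  intro hpar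
  have hpar' : ∀ x, norm2 g * f x = norm2 f * g x := fun x =>
    congrArg (fun v : EuclideanSpace ℝ X => v x) hpar
  have hnorm : norm2 g = norm2 f := by
    have := Finset.sum_congr rfl fun x (_ : x ∈ Finset.univ) => hpar' x
    rw [← Finset.mul_sum, ← Finset.mul_sum, ← hsum] at this
    exact mul_right_cancel₀ hf this
  have hf0 : f ≠ 0 := fun h => hf (by simp [h])
  exact hne (funext fun x => mul_left_cancel₀ (norm2_pos hf0).ne' (hnorm ▸ hpar' x))

lemma sub_inner2_div_norm2_nonneg (f g : X → ℝ) : 0 ≤ norm2 f - inner2 f g / norm2 g :=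
  sub_nonneg.2 <| div_le_of_le_mul₀ (norm2_nonneg g) (norm2_nonneg f)
    (inner2_le_norm2_mul_norm2 f g)

lemma sum_mul_sub_div_norm2 (f g : X → ℝ) :
    ∑ x, f x * (f x / norm2 f - g x / norm2 g) = norm2 f - inner2 f g / norm2 g := by
  have hsq : ∑ x, f x * f x = norm2 f * norm2 f := by
    rw [norm2, Real.mul_self_sqrt (Finset.sum_nonneg fun x _ => sq_nonneg (f x))]
    simp only [sq]
  simp only [mul_sub, Finset.sum_sub_distrib, mul_div_assoc', ← Finset.sum_div, hsq,
    mul_self_div_self, inner2]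

end Euclidean

section Game

variable {n : ℕ} {A : Fin n → Type*}

lemma joinA_apply_self (i : Fin n) (j : A i) (b : ∀ l : {l : Fin n // l ≠ i}, A l) :
    joinA i j b i = j :=
  congrArg Prod.fst ((Equiv.piSplitAt i A).apply_symm_apply (j, b))

lemma restr_joinA (i : Fin n) (j : A i) (b : ∀ l : {l : Fin n // l ≠ i}, A l) :
    restr i (joinA i j b) = b :=
  congrArg Prod.snd ((Equiv.piSplitAt i A).apply_symm_apply (j, b))

lemma sum_eq_sum_sum_joinA [∀ l, Fintype (A l)] {M : Type*} [AddCommMonoid M] (i : Fin n)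
    (F : (∀ l, A l) → M) : ∑ a, F a = ∑ j : A i, ∑ b, F (joinA i j b) := by
  rw [← (Equiv.piSplitAt i A).symm.sum_comp, Fintype.sum_prod_type]
  rfl

variable [∀ l, Fintype (A l)] (σ : (∀ l, A l) → ℝ)

lemma marg_nonneg (hσ : ∀ a, 0 ≤ σ a) (i : Fin n) (j : A i) : 0 ≤ marg σ i j :=
  Finset.sum_nonneg fun _ _ => hσ _

lemma sum_marg (hσ : ∑ a, σ a = 1) (i : Fin n) : ∑ j : A i, marg σ i j = 1 := by
  rw [← hσ, sum_eq_sum_sum_joinA i σ]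
  rfl

lemma marg_eq_one_of_forall_ne (hσ : IsMixed σ) {i : Fin n} {j : A i}
    (h : ∀ l ≠ j, ¬ 0 < marg σ i l) : marg σ i j = 1 := by
  rw [← sum_marg σ hσ.2 i, Fintype.sum_eq_single j]
  exact fun l hl => le_antisymm (not_lt.1 (h l hl)) (marg_nonneg σ hσ.1 i l)

lemma condl_eq_zero {i : Fin n} {j : A i} (h : ¬ 0 < marg σ i j) : condl σ i j = 0 :=
  funext fun _ => if_neg h

lemma sum_condl {i : Fin n} {j : A i} (h : 0 < marg σ i j) : ∑ b, condl σ i j b = 1 := by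
  simp only [condl, if_pos h, ← Finset.sum_div]
  exact div_self h.ne'

lemma condl_ne_zero {i : Fin n} {j : A i} (h : 0 < marg σ i j) : condl σ i j ≠ 0 := by
  intro h0
  simpa [h0] using sum_condl σ h

lemma apply_joinA_eq_marg_mul_condl (hσ : ∀ a, 0 ≤ σ a) (i : Fin n) (j : A i)
    (b : ∀ l : {l : Fin n // l ≠ i}, A l) :
    σ (joinA i j b) = marg σ i j * condl σ i j b := by
  by_cases h : 0 < marg σ i j
  · rw [condl, if_pos h]
    field_simp
  · rw [condl_eq_zero σ h, Pi.zero_apply, mul_zero]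
    have hmarg : marg σ i j = 0 := le_antisymm (not_lt.1 h) (marg_nonneg σ hσ i j)
    exact (Finset.sum_eq_zero_iff_of_nonneg fun b _ => hσ _).1 hmarg b (Finset.mem_univ b)

-- For an unsupported action `σ_{ij} = 0`, so the junk value `0 / 0 = 0` matches the definition.
lemma wit_apply (i : Fin n) (a : ∀ l, A l) :
    wit σ i a = condl σ i (a i) (restr i a) / norm2 (condl σ i (a i)) := by
  rw [wit]
  split_ifs with h
  · rfl
  · simp [condl_eq_zero σ h]

lemma abs_wit_le_one (i : Fin n) (a : ∀ l, A l) : |wit σ i a| ≤ 1 := by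
  rw [wit_apply]
  exact abs_div_norm2_le_one _ _

lemma wit_joinA (i : Fin n) (j : A i) (b : ∀ l : {l : Fin n // l ≠ i}, A l) :
    wit σ i (joinA i j b) = condl σ i j b / norm2 (condl σ i j) := by
  rw [wit_apply, joinA_apply_self, restr_joinA]

lemma tq_eq (i : Fin n) (j k : A i) :
    tq σ i j k =
      norm2 (condl σ i j) - inner2 (condl σ i j) (condl σ i k) / norm2 (condl σ i k) := by
  rw [tq]
  split_ifs with h
  · simp [h, inner2]
  · rfl

lemma tq_nonneg (i : Fin n) (j k : A i) : 0 ≤ tq σ i j k := by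
  rw [tq_eq]
  exact sub_inner2_div_norm2_nonneg _ _

lemma tq_pos {i : Fin n} {j k : A i} (hj : 0 < marg σ i j) (hjk : condl σ i j ≠ condl σ i k) :
    0 < tq σ i j k := by
  by_cases hk : 0 < marg σ i k
  · rw [tq_eq, sub_pos, div_lt_iff₀ (norm2_pos (condl_ne_zero σ hk))]
    refine inner2_lt_norm2_mul_norm2 hjk ?_ ?_ <;> rw [sum_condl σ hj]
    · rw [sum_condl σ hk]
    · exact one_ne_zero
  · rw [tq, if_pos (condl_eq_zero σ hk)]
    exact norm2_pos (condl_ne_zero σ hj)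

lemma sum_mul_wit_sub_wit_joinA (hσ : ∀ a, 0 ≤ σ a) (i : Fin n) (m : A i) :
    ∑ a, σ a * (wit σ i a - wit σ i (joinA i m (restr i a))) =
      ∑ l : A i, marg σ i l * tq σ i l m := by
  rw [sum_eq_sum_sum_joinA i]
  refine Finset.sum_congr rfl fun l _ => ?_
  simp only [restr_joinA, wit_joinA, apply_joinA_eq_marg_mul_condl σ hσ, mul_assoc,
    ← Finset.mul_sum, sum_mul_sub_div_norm2, tq_eq]

def Nondegenerate (i : Fin n) : Prop :=
  (∃! j : A i, 0 < marg σ i j) ∨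
    ∃ j k : A i, j ≠ k ∧ 0 < marg σ i j ∧ 0 < marg σ i k ∧ condl σ i j ≠ condl σ i k

lemma exists_marg_pos_condl_ne (hσ : IsMixed σ) {i : Fin n} (hc : Nondegenerate σ i)
    {m : A i} (hm : marg σ i m < 1) :
    ∃ l, 0 < marg σ i l ∧ condl σ i l ≠ condl σ i m := by
  rcases hc with ⟨j, hj, huniq⟩ | ⟨j, k, -, hj, hk, hjk⟩
  · have hm0 : ¬ 0 < marg σ i m := fun hm_pos => by
      obtain rfl := huniq m hm_pos
      exact hm.ne (marg_eq_one_of_forall_ne σ hσ fun l hl hl_pos => hl (huniq l hl_pos))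
    exact ⟨j, hj, by rw [condl_eq_zero σ hm0]; exact condl_ne_zero σ hj⟩
  · by_cases hjm : condl σ i j = condl σ i m
    · exact ⟨k, hk, fun hkm => hjk (hjm.trans hkm.symm)⟩
    · exact ⟨j, hj, hjm⟩

lemma sum_marg_mul_tq_pos (hσ : IsMixed σ) {i : Fin n} (hc : Nondegenerate σ i)
    {m : A i} (hm : marg σ i m < 1) : 0 < ∑ l : A i, marg σ i l * tq σ i l m := by
  obtain ⟨l, hl, hlm⟩ := exists_marg_pos_condl_ne σ hσ hc hm
  exact Finset.sum_pos' (fun l _ => mul_nonneg (marg_nonneg σ hσ.1 i l) (tq_nonneg σ i l m))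
    ⟨l, Finset.mem_univ l, mul_pos hl (tq_pos σ hl hlm)⟩

end Game

theorem eps_sCCE_of_scaled_witness_general {n : ℕ} {A : Fin n → Type*}
    [∀ l, Fintype (A l)]
    (σ : (∀ l, A l) → ℝ) (hσ : IsMixed σ)
    (hc : ∀ i : Fin n,
      (∃! j : A i, 0 < marg σ i j) ∨
      (∃ j k : A i, j ≠ k ∧ 0 < marg σ i j ∧ 0 < marg σ i k ∧ condl σ i j ≠ condl σ i k)) :
    (∀ i : Fin n, ∀ m : A i, marg σ i m < 1 → 0 < ∑ l : A i, marg σ i l * tq σ i l m) ∧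
    (∀ B : ℝ, 0 < B → ∀ ε : ℝ, 0 < ε →
      (∀ i : Fin n, ∀ m : A i, marg σ i m < 1 →
        ε ≤ B * ∑ l : A i, marg σ i l * tq σ i l m) →
      ((∀ i : Fin n, ∀ a : ∀ l, A l, |B * wit σ i a| ≤ B) ∧
        ∀ i : Fin n, ∀ m : A i, marg σ i m < 1 →
          ε ≤ ∑ a : ∀ l, A l,
                σ a * (B * wit σ i a - B * wit σ i (joinA i m (restr i a))))) := by
  refine ⟨fun i m hm => sum_marg_mul_tq_pos σ hσ (hc i) hm,
    fun B hB ε _ hε => ⟨fun i a => ?_, fun i m hm => ?_⟩⟩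
  · rw [abs_mul, abs_of_pos hB]
    exact mul_le_of_le_one_right hB.le (abs_wit_le_one σ i a)
  · simp_rw [← mul_sub, mul_left_comm (σ _) B, ← Finset.mul_sum,
      sum_mul_wit_sub_wit_joinA σ hσ.1]
    exact hε i m hm

/-- **ε-sCCE via the scaled witness.** Suppose each `|A i| ≥ 2` and each player either has
exactly one `σ`-supported action or has two `σ`-supported actions with differing
conditionals. Then `γ^{CCE} = min_{i, m : p_{im} < 1} ∑_ℓ p_{iℓ} t_{iℓm} > 0`, i.e. each
such sum is positive; and for any `B > 0` and `0 < ε ≤ B γ^{CCE}` (i.e.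
`ε ≤ B ∑_ℓ p_{iℓ} t_{iℓm}` for all such `i, m`), the scaled witness `u = B w` is bounded by
`B` and achieves a CCE deviation gap of at least `ε`. -/
theorem eps_sCCE_of_scaled_witness {n : ℕ} {A : Fin n → Type*}
    [∀ l, Fintype (A l)] [∀ l, Nonempty (A l)]
    (hcard : ∀ l, 2 ≤ Fintype.card (A l))
    (σ : (∀ l, A l) → ℝ) (hσ : IsMixed σ)
    (hc : ∀ i : Fin n,
      (∃! j : A i, 0 < marg σ i j) ∨
      (∃ j k : A i, j ≠ k ∧ 0 < marg σ i j ∧ 0 < marg σ i k ∧ condl σ i j ≠ condl σ i k)) :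
    (∀ i : Fin n, ∀ m : A i, marg σ i m < 1 → 0 < ∑ l : A i, marg σ i l * tq σ i l m) ∧
    (∀ B : ℝ, 0 < B → ∀ ε : ℝ, 0 < ε →
      (∀ i : Fin n, ∀ m : A i, marg σ i m < 1 →
        ε ≤ B * ∑ l : A i, marg σ i l * tq σ i l m) →
      ((∀ i : Fin n, ∀ a : ∀ l, A l, |B * wit σ i a| ≤ B) ∧
        ∀ i : Fin n, ∀ m : A i, marg σ i m < 1 →
          ε ≤ ∑ a : ∀ l, A l,
                σ a * (B * wit σ i a - B * wit σ i (joinA i m (restr i a))))) :=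
  eps_sCCE_of_scaled_witness_general σ hσ hc
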